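/- arXiv:math/9901086 — 2 statements merged into one kernel-verified Lean document; each statement's English description precedes it below -/
import Mathlib

section
/- (Characterization of the Poisson operator P_u.) Let a ∈ u(n) be a fixed diagonal matrix and let u, v : ℝ → u(n)_a^⊥ be Schwartz-class maps. Then there exists a unique smooth ṽ : ℝ → u(n) satisfying: (i) π_a^⊥(ṽ(x)) = v(x) for all x; (ii) ṽ_x(x) + [u(x), ṽ(x)] ∈ u(n)_a^⊥ for all x; (iii) ṽ(x) → 0 as x → −∞. Moreover ṽ = v − T_u(v) and P_u(v) = ṽ_x + [u, ṽ]. -/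
/-! For diagonal `a`, `π_a` keeps the entries `(i, j)` with `a i i = a j j`, so `u(n)_a` and
`u(n)_a^⊥` are the block-diagonal and the off-block skew-Hermitian matrices, and the commutator
of an off-block with a block-diagonal matrix is off-block. Write a candidate as `ṽ = v − T` with
`T` block-diagonal. Since `π_a v' = 0` and `π_a [u, T] = 0`, condition (ii) reads
`T' = π_a [u, v]`, and with (iii) this forces `T = T_u(v)`: two solutions differ by a
block-diagonal `d` with `d' = π_a (d' + [u, d]) = 0` and `d → 0` at `−∞`. -/

open Matrix Filter MeasureTheory
open scoped Classical

attribute [local instance] Matrix.normedAddCommGroup Matrix.normedSpace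

/-- A map of `ℝ` into a normed space is of Schwartz class if it is (the underlying function
of) a Schwartz map. -/
def IsSchwartz {E : Type*} [NormedAddCommGroup E] [NormedSpace ℝ E] (f : ℝ → E) : Prop :=
  ∃ φ : SchwartzMap ℝ E, ⇑φ = f

variable {ι : Type*} [Fintype ι] [DecidableEq ι]

/-- The centralizer `u(n)_a = {y ∈ u(n) : [y,a] = 0}` of `a` in `u(n)`. -/
def uCent (a : Matrix ι ι ℂ) : Set (Matrix ι ι ℂ) :=
  {y | yᴴ = -y ∧ y * a = a * y}

/-- The orthogonal complement `u(n)_a^⊥` of `u(n)_a` in `u(n)` w.r.t. `⟨x,y⟩ = −tr(xy)`. -/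
def uPerp (a : Matrix ι ι ℂ) : Set (Matrix ι ι ℂ) :=
  {y | yᴴ = -y ∧ ∀ z ∈ uCent a, -(y * z).trace = 0}

/-- The orthogonal projection `π_a` of `u(n)` onto `u(n)_a` (for `a` diagonal): it keeps
exactly the entries `(i,j)` with `a i i = a j j`. -/
noncomputable def centProj (a y : Matrix ι ι ℂ) : Matrix ι ι ℂ :=
  Matrix.of fun i j => if a i i = a j j then y i j else 0

/-- The orthogonal projection `π_a^⊥` of `u(n)` onto `u(n)_a^⊥` (for `a` diagonal): it keeps
exactly the entries `(i,j)` with `a i i ≠ a j j`. -/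
noncomputable def perpProj (a y : Matrix ι ι ℂ) : Matrix ι ι ℂ :=
  Matrix.of fun i j => if a i i = a j j then 0 else y i j

/-- The integral operator `T_u(v)(x) = ∫_{−∞}^x π_a([u(y), v(y)]) dy`. -/
noncomputable def Tu (a : Matrix ι ι ℂ) (u v : ℝ → Matrix ι ι ℂ) (x : ℝ) : Matrix ι ι ℂ :=
  ∫ y in Set.Iic x, centProj a (u y * v y - v y * u y)

/-- The Poisson operator `P_u(v) = v_x + π_a^⊥([u,v]) − [u, T_u(v)]`. -/
noncomputable def Pu (a : Matrix ι ι ℂ) (u v : ℝ → Matrix ι ι ℂ) (x : ℝ) : Matrix ι ι ℂ :=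
  deriv v x + perpProj a (u x * v x - v x * u x)
    - (u x * Tu a u v x - Tu a u v x * u x)

open Topology

section Projections

variable {m : Type*} {a : Matrix m m ℂ}

theorem centProj_apply (a y : Matrix m m ℂ) (i j : m) :
    centProj a y i j = if a i i = a j j then y i j else 0 := rfl

theorem perpProj_eq_sub_centProj (y : Matrix m m ℂ) : perpProj a y = y - centProj a y := by
  ext i j
  simp only [perpProj, centProj_apply, of_apply, Matrix.sub_apply]
  split_ifs <;> simp

theorem centProj_eq_zero_iff {y : Matrix m m ℂ} :
    centProj a y = 0 ↔ ∀ i j, a i i = a j j → y i j = 0 := by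
  simp only [← Matrix.ext_iff, centProj_apply, Matrix.zero_apply, ite_eq_right_iff]

theorem centProj_eq_self_iff {y : Matrix m m ℂ} :
    centProj a y = y ↔ ∀ i j, a i i ≠ a j j → y i j = 0 := by
  simp only [← Matrix.ext_iff, centProj_apply, ite_eq_left_iff, eq_comm (a := (0 : ℂ))]

theorem centProj_centProj (y : Matrix m m ℂ) : centProj a (centProj a y) = centProj a y :=
  centProj_eq_self_iff.2 fun i j hij => by simp [centProj_apply, hij]

theorem centProj_conjTranspose (y : Matrix m m ℂ) : centProj a yᴴ = (centProj a y)ᴴ := by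
  ext i j
  simp only [centProj_apply, conjTranspose_apply, eq_comm (a := a i i)]
  split_ifs <;> simp

theorem conjTranspose_commutator [Fintype m] {x y : Matrix m m ℂ} (hx : xᴴ = -x)
    (hy : yᴴ = -y) : (x * y - y * x)ᴴ = -(x * y - y * x) := by
  simp only [conjTranspose_sub, conjTranspose_mul, hx, hy, neg_mul_neg, neg_sub]

variable [Fintype m]

noncomputable def centProjL (a : Matrix m m ℂ) : Matrix m m ℂ →L[ℝ] Matrix m m ℂ :=
  LinearMap.toContinuousLinearMap
    { toFun := centProj a
      map_add' := fun x y => by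
        ext i j
        simp only [centProj_apply, Matrix.add_apply]
        split_ifs <;> simp
      map_smul' := fun c x => by
        ext i j
        simp only [centProj_apply, Matrix.smul_apply, RingHom.id_apply]
        split_ifs <;> simp }

@[simp] theorem centProjL_apply (y : Matrix m m ℂ) : centProjL a y = centProj a y := rfl

noncomputable def conjTransposeL : Matrix m m ℂ →L[ℝ] Matrix m m ℂ :=
  LinearMap.toContinuousLinearMap
    { toFun := conjTranspose
      map_add' := conjTranspose_add
      map_smul' := fun r x => by simp [conjTranspose_smul] }

@[simp] theorem conjTransposeL_apply (y : Matrix m m ℂ) : conjTransposeL y = yᴴ := rfl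

theorem centProj_add (x y : Matrix m m ℂ) :
    centProj a (x + y) = centProj a x + centProj a y :=
  map_add (centProjL a) x y

theorem centProj_sub (x y : Matrix m m ℂ) :
    centProj a (x - y) = centProj a x - centProj a y :=
  map_sub (centProjL a) x y

theorem centProj_neg (y : Matrix m m ℂ) : centProj a (-y) = -centProj a y :=
  map_neg (centProjL a) y

theorem centProj_perpProj (y : Matrix m m ℂ) : centProj a (perpProj a y) = 0 := by
  rw [perpProj_eq_sub_centProj, centProj_sub, centProj_centProj, sub_self]

theorem trace_centProj (y : Matrix m m ℂ) : (centProj a y).trace = y.trace := by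
  simp [trace, centProj_apply]

theorem centProj_mul_eq_zero_of_left {p q : Matrix m m ℂ} (hp : centProj a p = 0)
    (hq : centProj a q = q) : centProj a (p * q) = 0 := by
  rw [centProj_eq_zero_iff] at hp ⊢
  rw [centProj_eq_self_iff] at hq
  intro i j hij
  refine Finset.sum_eq_zero fun k _ => ?_
  by_cases hk : a i i = a k k
  · simp [hp i k hk]
  · simp [hq k j fun h => hk (hij.trans h.symm)]

theorem centProj_mul_eq_zero_of_right {p q : Matrix m m ℂ} (hp : centProj a p = 0)
    (hq : centProj a q = q) : centProj a (q * p) = 0 := by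
  rw [centProj_eq_zero_iff] at hp ⊢
  rw [centProj_eq_self_iff] at hq
  intro i j hij
  refine Finset.sum_eq_zero fun k _ => ?_
  by_cases hk : a k k = a j j
  · simp [hp k j hk]
  · simp [hq i k fun h => hk (h.symm.trans hij)]

theorem centProj_commutator_eq_zero {p q : Matrix m m ℂ} (hp : centProj a p = 0)
    (hq : centProj a q = q) : centProj a (p * q - q * p) = 0 := by
  rw [centProj_sub, centProj_mul_eq_zero_of_left hp hq, centProj_mul_eq_zero_of_right hp hq,
    sub_zero]

theorem trace_mul_eq_zero_of_centProj {p q : Matrix m m ℂ} (hp : centProj a p = 0)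
    (hq : centProj a q = q) : (p * q).trace = 0 := by
  rw [← trace_centProj, centProj_mul_eq_zero_of_left hp hq, trace_zero]

theorem mul_comm_iff_centProj_eq_self (ha : a.IsDiag) {z : Matrix m m ℂ} :
    z * a = a * z ↔ centProj a z = z := by
  obtain ⟨d, rfl⟩ : ∃ d, diagonal d = a := ⟨a.diag, ha.diagonal_diag⟩
  rw [centProj_eq_self_iff, ← Matrix.ext_iff]
  simp only [mul_diagonal, diagonal_mul, diagonal_apply_eq]
  refine forall₂_congr fun i j => ?_
  rw [mul_comm, mul_eq_mul_right_iff, eq_comm, or_iff_not_imp_left]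

theorem mem_uCent_iff (ha : a.IsDiag) {z : Matrix m m ℂ} :
    z ∈ uCent a ↔ zᴴ = -z ∧ centProj a z = z :=
  Iff.and Iff.rfl (mul_comm_iff_centProj_eq_self ha)

open scoped ComplexOrder in
theorem mem_uPerp_iff (ha : a.IsDiag) {y : Matrix m m ℂ} :
    y ∈ uPerp a ↔ yᴴ = -y ∧ centProj a y = 0 := by
  refine ⟨fun ⟨hy, horth⟩ => ⟨hy, ?_⟩, fun ⟨hy, hyc⟩ => ⟨hy, fun z hz => ?_⟩⟩
  · -- test the orthogonality against `z = π_a y ∈ u(n)_a`: it yields `tr(zᴴ z) = 0`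
    set z := centProj a y
    have hz : zᴴ = -z := by rw [← centProj_conjTranspose, hy, centProj_neg]
    have hzz : centProj a z = z := centProj_centProj y
    have hyz : (y * z).trace = 0 := neg_eq_zero.1 (horth z ((mem_uCent_iff ha).2 ⟨hz, hzz⟩))
    have hperp : (perpProj a y * z).trace = 0 :=
      trace_mul_eq_zero_of_centProj (centProj_perpProj y) hzz
    rw [perpProj_eq_sub_centProj, sub_mul, trace_sub, hyz, zero_sub, neg_eq_zero] at hperp
    rw [← trace_conjTranspose_mul_self_eq_zero_iff, hz, neg_mul, trace_neg, hperp, neg_zero]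
  · rw [neg_eq_zero]
    exact trace_mul_eq_zero_of_centProj hyc ((mem_uCent_iff ha).1 hz).2

theorem add_mem_uPerp (ha : a.IsDiag) {x y : Matrix m m ℂ} (hx : x ∈ uPerp a)
    (hy : y ∈ uPerp a) : x + y ∈ uPerp a := by
  rw [mem_uPerp_iff ha] at *
  refine ⟨by rw [conjTranspose_add, hx.1, hy.1, neg_add], ?_⟩
  rw [centProj_add, hx.2, hy.2, add_zero]

theorem sub_mem_uPerp (ha : a.IsDiag) {x y : Matrix m m ℂ} (hx : x ∈ uPerp a)
    (hy : y ∈ uPerp a) : x - y ∈ uPerp a := by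
  rw [mem_uPerp_iff ha] at *
  refine ⟨by rw [conjTranspose_sub, hx.1, hy.1, neg_sub_neg, neg_sub], ?_⟩
  rw [centProj_sub, hx.2, hy.2, sub_zero]

theorem perpProj_mem_uPerp (ha : a.IsDiag) {y : Matrix m m ℂ} (hy : yᴴ = -y) :
    perpProj a y ∈ uPerp a := by
  refine (mem_uPerp_iff ha).2 ⟨?_, centProj_perpProj y⟩
  rw [perpProj_eq_sub_centProj, conjTranspose_sub, ← centProj_conjTranspose, hy, centProj_neg,
    neg_sub_neg, neg_sub]

theorem commutator_mem_uPerp (ha : a.IsDiag) {x y : Matrix m m ℂ} (hx : x ∈ uPerp a)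
    (hy : yᴴ = -y) (hyc : centProj a y = y) : x * y - y * x ∈ uPerp a := by
  rw [mem_uPerp_iff ha] at *
  exact ⟨conjTranspose_commutator hx.1 hy, centProj_commutator_eq_zero hx.2 hyc⟩

end Projections

section Analysis

variable {E : Type*} [NormedAddCommGroup E] [NormedSpace ℝ E]

theorem IsSchwartz.contDiff {f : ℝ → E} (hf : IsSchwartz f) : ContDiff ℝ (⊤ : ℕ∞) f := by
  obtain ⟨φ, rfl⟩ := hf
  exact φ.smooth ⊤

theorem IsSchwartz.integrable {f : ℝ → E} (hf : IsSchwartz f) : Integrable f := by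
  obtain ⟨φ, rfl⟩ := hf
  exact φ.integrable

theorem IsSchwartz.hasTemperateGrowth {f : ℝ → E} (hf : IsSchwartz f) :
    f.HasTemperateGrowth := by
  obtain ⟨φ, rfl⟩ := hf
  exact φ.hasTemperateGrowth

theorem IsSchwartz.tendsto_atBot {f : ℝ → E} (hf : IsSchwartz f) : Tendsto f atBot (𝓝 0) := by
  obtain ⟨φ, rfl⟩ := hf
  exact φ.toZeroAtInfty.zero_at_infty'.mono_left atBot_le_cocompact

theorem IsSchwartz.bilin {𝕜 F G : Type*} [NontriviallyNormedField 𝕜] [NormedAlgebra ℝ 𝕜]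
    [NormedSpace 𝕜 E] [NormedAddCommGroup F] [NormedSpace ℝ F] [NormedSpace 𝕜 F]
    [NormedAddCommGroup G] [NormedSpace ℝ G] [NormedSpace 𝕜 G] (B : E →L[𝕜] F →L[𝕜] G)
    {f : ℝ → E} {g : ℝ → F} (hf : IsSchwartz f) (hg : g.HasTemperateGrowth) :
    IsSchwartz fun x => B (f x) (g x) := by
  obtain ⟨φ, rfl⟩ := hf
  exact ⟨SchwartzMap.bilinLeftCLM B hg φ, rfl⟩

theorem hasDerivAt_integral_Iic [CompleteSpace E] {f : ℝ → E} (hf : Integrable f)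
    (hc : Continuous f) (x : ℝ) : HasDerivAt (fun b => ∫ t in Set.Iic b, f t) (f x) x := by
  have h : (fun b => ∫ t in Set.Iic b, f t) = fun b => (∫ t in Set.Iic 0, f t) + ∫ t in 0..b, f t :=
    funext fun b => by
      rw [← intervalIntegral.integral_Iic_sub_Iic hf.integrableOn hf.integrableOn,
        add_sub_cancel]
  rw [h]
  exact (hc.integral_hasStrictDerivAt 0 x).hasDerivAt.const_add _

theorem tendsto_integral_Iic_atBot {f : ℝ → E} (hf : Integrable f) :
    Tendsto (fun b => ∫ t in Set.Iic b, f t) atBot (𝓝 0) := by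
  have h : (fun b => ∫ t in Set.Iic b, f t) = fun b => (∫ t in Set.Iic 0, f t) - ∫ t in b..0, f t :=
    funext fun b => by
      rw [← intervalIntegral.integral_Iic_sub_Iic hf.integrableOn hf.integrableOn, sub_sub_cancel]
  rw [h, ← sub_self (∫ t in Set.Iic 0, f t)]
  exact tendsto_const_nhds.sub (intervalIntegral_tendsto_integral_Iic 0 hf.integrableOn tendsto_id)

theorem contDiff_integral_Iic [CompleteSpace E] {f : ℝ → E} (hf : Integrable f)
    (hc : ContDiff ℝ (⊤ : ℕ∞) f) : ContDiff ℝ (⊤ : ℕ∞) fun b => ∫ t in Set.Iic b, f t := by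
  have hd := hasDerivAt_integral_Iic hf hc.continuous
  rw [contDiff_infty_iff_deriv]
  refine ⟨fun x => (hd x).differentiableAt, ?_⟩
  rwa [show deriv (fun b => ∫ t in Set.Iic b, f t) = f from funext fun x => (hd x).deriv]

theorem ContinuousLinearMap.map_integral_of_forall_eq_smul [CompleteSpace E] {X : Type*}
    [MeasurableSpace X] {μ : Measure X} (L : E →L[ℝ] E) {c : ℝ} {f : X → E}
    (hf : ∀ x, L (f x) = c • f x) : L (∫ x, f x ∂μ) = c • ∫ x, f x ∂μ := by
  by_cases hi : Integrable f μ
  · rw [← L.integral_comp_comm hi, ← integral_smul]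
    exact integral_congr_ae (ae_of_all _ hf)
  · rw [integral_undef hi, map_zero, smul_zero]

theorem eq_zero_of_deriv_eq_zero_of_tendsto_atBot {f : ℝ → E} (hf : Differentiable ℝ f)
    (hf' : ∀ x, deriv f x = 0) (ht : Tendsto f atBot (𝓝 0)) : f = 0 := by
  funext x
  rw [show f = fun _ => f x from funext fun y => is_const_of_deriv_eq_zero hf hf' y x] at ht
  exact tendsto_nhds_unique tendsto_const_nhds ht

end Analysis

section Poisson

variable {m : Type*} [Fintype m] {a : Matrix m m ℂ}

theorem HasDerivAt.centProj {f : ℝ → Matrix m m ℂ} {f' : Matrix m m ℂ} {x : ℝ}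
    (hf : HasDerivAt f f' x) : HasDerivAt (fun y => centProj a (f y)) (centProj a f') x :=
  (centProjL a).hasFDerivAt.comp_hasDerivAt x hf

theorem deriv_mem_uPerp (ha : a.IsDiag) {f : ℝ → Matrix m m ℂ} (hf : Differentiable ℝ f)
    (hfP : ∀ x, f x ∈ uPerp a) (x : ℝ) : deriv f x ∈ uPerp a := by
  have hd := (hf x).hasDerivAt
  refine (mem_uPerp_iff ha).2 ⟨?_, ?_⟩
  · have hstar := hd.star
    simp only [star_eq_conjTranspose, fun y => (hfP y).1] at hstar
    exact hstar.unique hd.neg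
  · have hcent := hd.centProj (a := a)
    simp only [fun y => ((mem_uPerp_iff ha).1 (hfP y)).2] at hcent
    exact hcent.unique (hasDerivAt_const x 0)

noncomputable def centCommL (a : Matrix m m ℂ) :
    Matrix m m ℂ →L[ℝ] Matrix m m ℂ →L[ℝ] Matrix m m ℂ :=
  ((LinearMap.mul ℝ (Matrix m m ℂ) - (LinearMap.mul ℝ (Matrix m m ℂ)).flip).compr₂
    (centProjL a).toLinearMap).toContinuousBilinearMap

theorem centCommL_apply (x y : Matrix m m ℂ) :
    centCommL a x y = centProj a (x * y - y * x) := rfl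

variable {u v : ℝ → Matrix m m ℂ}

theorem isSchwartz_centProj_commutator (hu : IsSchwartz u) (hv : IsSchwartz v) :
    IsSchwartz fun x => centProj a (u x * v x - v x * u x) :=
  hu.bilin (centCommL a) hv.hasTemperateGrowth

theorem hasDerivAt_Tu (hu : IsSchwartz u) (hv : IsSchwartz v) (x : ℝ) :
    HasDerivAt (Tu a u v) (centProj a (u x * v x - v x * u x)) x :=
  have hg := isSchwartz_centProj_commutator (a := a) hu hv
  hasDerivAt_integral_Iic hg.integrable hg.contDiff.continuous x

theorem contDiff_Tu (hu : IsSchwartz u) (hv : IsSchwartz v) :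
    ContDiff ℝ (⊤ : ℕ∞) (Tu a u v) :=
  have hg := isSchwartz_centProj_commutator (a := a) hu hv
  contDiff_integral_Iic hg.integrable hg.contDiff

theorem tendsto_Tu_atBot (hu : IsSchwartz u) (hv : IsSchwartz v) :
    Tendsto (Tu a u v) atBot (𝓝 0) :=
  tendsto_integral_Iic_atBot (isSchwartz_centProj_commutator hu hv).integrable

theorem centProj_Tu (x : ℝ) : centProj a (Tu a u v x) = Tu a u v x := by
  -- the normed structure on matrices is only a local instance, so `centProjL a` and `Tu` match
  -- up to unfolding (`exact`, `show`) but not syntactically (`simp`, `rw`)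
  have h := (centProjL a).map_integral_of_forall_eq_smul (c := 1)
    (f := fun t => centProj a (u t * v t - v t * u t)) (μ := volume.restrict (Set.Iic x))
    fun t => show centProj a (centProj a _) = _ by rw [centProj_centProj, one_smul]
  rw [one_smul] at h
  exact h

theorem conjTranspose_Tu (huS : ∀ x, (u x)ᴴ = -u x) (hvS : ∀ x, (v x)ᴴ = -v x) (x : ℝ) :
    (Tu a u v x)ᴴ = -Tu a u v x := by
  have h := conjTransposeL.map_integral_of_forall_eq_smul (c := -1)
    (f := fun t => centProj a (u t * v t - v t * u t)) (μ := volume.restrict (Set.Iic x))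
    fun t => show (centProj a _)ᴴ = _ by
      rw [← centProj_conjTranspose, conjTranspose_commutator (huS t) (hvS t), centProj_neg,
        neg_one_smul]
  rw [neg_one_smul] at h
  exact h

theorem Pu_eq_deriv_add_commutator (hu : IsSchwartz u) (hv : IsSchwartz v) (x : ℝ) :
    Pu a u v x = deriv (fun y => v y - Tu a u v y) x
      + (u x * (v x - Tu a u v x) - (v x - Tu a u v x) * u x) := by
  have hd : deriv (fun y => v y - Tu a u v y) x
      = deriv v x - centProj a (u x * v x - v x * u x) :=
    ((hv.contDiff.differentiable (by simp) x).hasDerivAt.sub (hasDerivAt_Tu hu hv x)).deriv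
  rw [hd, Pu, perpProj_eq_sub_centProj]
  noncomm_ring

theorem conjTranspose_sub_Tu (huS : ∀ x, (u x)ᴴ = -u x) (hvS : ∀ x, (v x)ᴴ = -v x) (x : ℝ) :
    (v x - Tu a u v x)ᴴ = -(v x - Tu a u v x) := by
  rw [conjTranspose_sub, hvS x, conjTranspose_Tu huS hvS, neg_sub_neg, neg_sub]

theorem perpProj_sub_Tu {x : ℝ} (hvC : centProj a (v x) = 0) :
    perpProj a (v x - Tu a u v x) = v x := by
  rw [perpProj_eq_sub_centProj, centProj_sub, hvC, centProj_Tu, zero_sub, sub_neg_eq_add,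
    sub_add_cancel]

theorem Pu_mem_uPerp (ha : a.IsDiag) (hv : Differentiable ℝ v) (huP : ∀ x, u x ∈ uPerp a)
    (hvP : ∀ x, v x ∈ uPerp a) (x : ℝ) : Pu a u v x ∈ uPerp a :=
  sub_mem_uPerp ha
    (add_mem_uPerp ha (deriv_mem_uPerp ha hv hvP x)
      (perpProj_mem_uPerp ha (conjTranspose_commutator (huP x).1 (hvP x).1)))
    (commutator_mem_uPerp ha (huP x)
      (conjTranspose_Tu (fun y => (huP y).1) (fun y => (hvP y).1) x) (centProj_Tu x))

theorem eq_of_perpProj_eq {w₁ w₂ : ℝ → Matrix m m ℂ} (hu : ∀ x, centProj a (u x) = 0)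
    (hw₁ : Differentiable ℝ w₁) (hw₂ : Differentiable ℝ w₂)
    (hperp : ∀ x, perpProj a (w₁ x) = perpProj a (w₂ x))
    (hc₁ : ∀ x, centProj a (deriv w₁ x + (u x * w₁ x - w₁ x * u x)) = 0)
    (hc₂ : ∀ x, centProj a (deriv w₂ x + (u x * w₂ x - w₂ x * u x)) = 0)
    (ht₁ : Tendsto w₁ atBot (𝓝 0)) (ht₂ : Tendsto w₂ atBot (𝓝 0)) : w₁ = w₂ := by
  set d := fun y => w₁ y - w₂ y
  have hd : Differentiable ℝ d := hw₁.sub hw₂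
  have hdc : ∀ x, centProj a (d x) = d x := fun x => by
    have h := hperp x
    rw [perpProj_eq_sub_centProj, perpProj_eq_sub_centProj] at h
    rw [centProj_sub]
    exact (sub_eq_sub_iff_sub_eq_sub.1 h).symm
  have hd' : ∀ x, deriv d x = 0 := fun x => by
    have hdd : centProj a (deriv d x) = deriv d x := by
      have h := (hd x).hasDerivAt.centProj (a := a)
      rw [show (fun y => centProj a (d y)) = d from funext hdc] at h
      exact h.unique (hd x).hasDerivAt
    have key : deriv d x = (deriv w₁ x + (u x * w₁ x - w₁ x * u x))
        - (deriv w₂ x + (u x * w₂ x - w₂ x * u x)) - (u x * d x - d x * u x) := by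
      have h : deriv d x = deriv w₁ x - deriv w₂ x := deriv_fun_sub (hw₁ x) (hw₂ x)
      rw [h]
      simp only [d]
      noncomm_ring
    rw [← hdd, key, centProj_sub, centProj_sub, hc₁, hc₂,
      centProj_commutator_eq_zero (hu x) (hdc x), sub_zero, sub_zero]
  have ht : Tendsto d atBot (𝓝 0) := by simpa using ht₁.sub ht₂
  funext x
  have h0 := eq_zero_of_deriv_eq_zero_of_tendsto_atBot hd hd' ht
  exact sub_eq_zero.1 (congrFun h0 x)

end Poisson

theorem stmt7_general (n : ℕ)
    (a : Matrix (Fin n) (Fin n) ℂ) (haDiag : a.IsDiag)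
    (u v : ℝ → Matrix (Fin n) (Fin n) ℂ)
    (huS : IsSchwartz u) (hvS : IsSchwartz v)
    (huP : ∀ x, u x ∈ uPerp a) (hvP : ∀ x, v x ∈ uPerp a) :
    -- existence and uniqueness of ṽ
    (∃! w : ℝ → Matrix (Fin n) (Fin n) ℂ,
      ContDiff ℝ (⊤ : ℕ∞) w ∧ (∀ x, (w x)ᴴ = -(w x)) ∧
      (∀ x, perpProj a (w x) = v x) ∧
      (∀ x, deriv w x + (u x * w x - w x * u x) ∈ uPerp a) ∧
      Tendsto w atBot (nhds 0)) ∧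
    -- ṽ = v − T_u(v), i.e. v − T_u(v) satisfies all the above conditions
    (ContDiff ℝ (⊤ : ℕ∞) (fun x => v x - Tu a u v x) ∧
      (∀ x, (v x - Tu a u v x)ᴴ = -(v x - Tu a u v x)) ∧
      (∀ x, perpProj a (v x - Tu a u v x) = v x) ∧
      (∀ x, deriv (fun y => v y - Tu a u v y) x
          + (u x * (v x - Tu a u v x) - (v x - Tu a u v x) * u x) ∈ uPerp a) ∧
      Tendsto (fun x => v x - Tu a u v x) atBot (nhds 0)) ∧
    -- P_u(v) = ṽ_x + [u, ṽ]
    (∀ x, Pu a u v x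
        = deriv (fun y => v y - Tu a u v y) x
          + (u x * (v x - Tu a u v x) - (v x - Tu a u v x) * u x)) := by
  have huC x : centProj a (u x) = 0 := ((mem_uPerp_iff haDiag).1 (huP x)).2
  have hvC x : centProj a (v x) = 0 := ((mem_uPerp_iff haDiag).1 (hvP x)).2
  have hPu := Pu_eq_deriv_add_commutator (a := a) huS hvS
  have hT : Tendsto (fun x => v x - Tu a u v x) atBot (𝓝 0) := by
    have h := hvS.tendsto_atBot.sub (tendsto_Tu_atBot (a := a) huS hvS)
    rw [sub_zero] at h
    exact h
  have hw : ContDiff ℝ (⊤ : ℕ∞) (fun x => v x - Tu a u v x) ∧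
      (∀ x, (v x - Tu a u v x)ᴴ = -(v x - Tu a u v x)) ∧
      (∀ x, perpProj a (v x - Tu a u v x) = v x) ∧
      (∀ x, deriv (fun y => v y - Tu a u v y) x
          + (u x * (v x - Tu a u v x) - (v x - Tu a u v x) * u x) ∈ uPerp a) ∧
      Tendsto (fun x => v x - Tu a u v x) atBot (𝓝 0) :=
    ⟨hvS.contDiff.sub (contDiff_Tu huS hvS),
      conjTranspose_sub_Tu (fun x => (huP x).1) (fun x => (hvP x).1),
      fun x => perpProj_sub_Tu (hvC x),
      fun x => hPu x ▸ Pu_mem_uPerp haDiag (hvS.contDiff.differentiable (by simp)) huP hvP x,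
      hT⟩
  refine ⟨⟨_, hw, fun w ⟨hwC, _, hwP, hwM, hwT⟩ => ?_⟩, hw, hPu⟩
  exact eq_of_perpProj_eq huC (hwC.differentiable (by simp)) (hw.1.differentiable (by simp))
    (fun x => by rw [hwP, hw.2.2.1]) (fun x => ((mem_uPerp_iff haDiag).1 (hwM x)).2)
    (fun x => ((mem_uPerp_iff haDiag).1 (hw.2.2.2.1 x)).2) hwT hT

/-- Characterization of the Poisson operator `P_u`: for `a ∈ u(n)` diagonal and
Schwartz-class `u, v : ℝ → u(n)_a^⊥` there is a unique smooth `ṽ : ℝ → u(n)` with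
`π_a^⊥(ṽ) = v`, `ṽ_x + [u, ṽ] ∈ u(n)_a^⊥`, and `ṽ → 0` at `−∞`; moreover `ṽ = v − T_u(v)`
and `P_u(v) = ṽ_x + [u, ṽ]`. -/
theorem stmt7 (n : ℕ)
    (a : Matrix (Fin n) (Fin n) ℂ) (haDiag : a.IsDiag) (haSkew : aᴴ = -a)
    (u v : ℝ → Matrix (Fin n) (Fin n) ℂ)
    (huS : IsSchwartz u) (hvS : IsSchwartz v)
    (huP : ∀ x, u x ∈ uPerp a) (hvP : ∀ x, v x ∈ uPerp a) :
    -- existence and uniqueness of ṽ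
    (∃! w : ℝ → Matrix (Fin n) (Fin n) ℂ,
      ContDiff ℝ (⊤ : ℕ∞) w ∧ (∀ x, (w x)ᴴ = -(w x)) ∧
      (∀ x, perpProj a (w x) = v x) ∧
      (∀ x, deriv w x + (u x * w x - w x * u x) ∈ uPerp a) ∧
      Tendsto w atBot (nhds 0)) ∧
    -- ṽ = v − T_u(v), i.e. v − T_u(v) satisfies all the above conditions
    (ContDiff ℝ (⊤ : ℕ∞) (fun x => v x - Tu a u v x) ∧
      (∀ x, (v x - Tu a u v x)ᴴ = -(v x - Tu a u v x)) ∧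
      (∀ x, perpProj a (v x - Tu a u v x) = v x) ∧
      (∀ x, deriv (fun y => v y - Tu a u v y) x
          + (u x * (v x - Tu a u v x) - (v x - Tu a u v x) * u x) ∈ uPerp a) ∧
      Tendsto (fun x => v x - Tu a u v x) atBot (nhds 0)) ∧
    -- P_u(v) = ṽ_x + [u, ṽ]
    (∀ x, Pu a u v x
        = deriv (fun y => v y - Tu a u v y) x
          + (u x * (v x - Tu a u v x) - (v x - Tu a u v x) * u x)) :=
  stmt7_general n a haDiag u v huS hvS huP hvP
end

section
/- Let a = (i/2)·diag(I_k, −I_{n−k}), let q : ℝ → M_{k×(n−k)}(ℂ) be of Schwartz class, and set u = [[0, q],[−q*, 0]] and Q₂ = [[−i q q*, i q_x],[i q_x*, i q* q]]. Then P_u([a, u_x]) = (Q₂)_x + [u, Q₂]. -/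
open Matrix Filter MeasureTheory
open scoped Classical

attribute [local instance] Matrix.normedAddCommGroup Matrix.normedSpace

variable {ι : Type*} [Fintype ι] [DecidableEq ι]

/-! ### Auxiliary material for `stmt11` -/

namespace Stmt11Aux

section Calculus

variable {E F G : Type*} [NormedAddCommGroup E] [NormedSpace ℝ E]
  [NormedAddCommGroup F] [NormedSpace ℝ F] [NormedAddCommGroup G] [NormedSpace ℝ G]

theorem hasDerivAt_linear_comp [FiniteDimensional ℝ E] (A : E →ₗ[ℝ] F)
    {f : ℝ → E} {f' : E} {x : ℝ} (hf : HasDerivAt f f' x) :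
    HasDerivAt (fun y => A (f y)) (A f') x :=
  (LinearMap.toContinuousLinearMap A).hasFDerivAt.comp_hasDerivAt x hf

/-- A bilinear map between finite-dimensional spaces, as a continuous bilinear map. -/
noncomputable def toCLM2 [FiniteDimensional ℝ E] [FiniteDimensional ℝ F]
    (B : E →ₗ[ℝ] F →ₗ[ℝ] G) : E →L[ℝ] F →L[ℝ] G :=
  LinearMap.toContinuousLinearMap
    { toFun := fun e => LinearMap.toContinuousLinearMap (B e)
      map_add' := fun e₁ e₂ => by ext y; simp
      map_smul' := fun c e => by ext y; simp }

@[simp] theorem toCLM2_apply [FiniteDimensional ℝ E] [FiniteDimensional ℝ F]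
    (B : E →ₗ[ℝ] F →ₗ[ℝ] G) (e : E) (f : F) : toCLM2 B e f = B e f := rfl

theorem hasDerivAt_bilin [FiniteDimensional ℝ E] [FiniteDimensional ℝ F]
    (B : E →ₗ[ℝ] F →ₗ[ℝ] G) {f : ℝ → E} {g : ℝ → F} {f' : E} {g' : F} {x : ℝ}
    (hf : HasDerivAt f f' x) (hg : HasDerivAt g g' x) :
    HasDerivAt (fun y => B (f y) (g y)) (B f' (g x) + B (f x) g') x := by
  have hc : HasDerivAt (fun y => (toCLM2 B) (f y)) (toCLM2 B f') x :=
    hasDerivAt_linear_comp (toCLM2 B).toLinearMap hf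
  exact hc.clm_apply hg

theorem schwartz_hasTemperateGrowth (f : SchwartzMap E F) :
    Function.HasTemperateGrowth ⇑f :=
  ⟨f.smooth', fun n => ⟨0, SchwartzMap.seminorm ℝ 0 n f, fun x => by
    simpa using f.norm_iteratedFDeriv_le_seminorm ℝ n x⟩⟩

end Calculus

section Blocks

variable {K M : Type*} [Fintype K] [Fintype M] [DecidableEq K] [DecidableEq M]

theorem conjTranspose_real_smul (c : ℝ) (p : Matrix K M ℂ) : (c • p)ᴴ = c • pᴴ := by
  ext i j
  simp [Matrix.conjTranspose_apply, star_smul]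

/-- `p ↦ [[0,p],[−pᴴ,0]]` as a real-linear map. -/
noncomputable def Lu : Matrix K M ℂ →ₗ[ℝ] Matrix (K ⊕ M) (K ⊕ M) ℂ where
  toFun p := Matrix.fromBlocks 0 p (-pᴴ) 0
  map_add' p r := by
    simp [Matrix.fromBlocks_add, Matrix.conjTranspose_add, neg_add, add_comm]
  map_smul' c p := by
    simp [Matrix.fromBlocks_smul, conjTranspose_real_smul]

@[simp] theorem Lu_apply (p : Matrix K M ℂ) :
    (Lu p : Matrix (K ⊕ M) (K ⊕ M) ℂ) = Matrix.fromBlocks 0 p (-pᴴ) 0 := rfl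

/-- `p ↦ [[0,ip],[ipᴴ,0]]` as a real-linear map. -/
noncomputable def LV : Matrix K M ℂ →ₗ[ℝ] Matrix (K ⊕ M) (K ⊕ M) ℂ where
  toFun p := Matrix.fromBlocks 0 (Complex.I • p) (Complex.I • pᴴ) 0
  map_add' p r := by
    simp [Matrix.fromBlocks_add, Matrix.conjTranspose_add, smul_add]
  map_smul' c p := by
    simp only [RingHom.id_apply, Matrix.fromBlocks_smul, conjTranspose_real_smul, smul_zero]
    rw [smul_comm c Complex.I p, smul_comm c Complex.I pᴴ]

@[simp] theorem LV_apply (p : Matrix K M ℂ) :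
    (LV p : Matrix (K ⊕ M) (K ⊕ M) ℂ)
      = Matrix.fromBlocks 0 (Complex.I • p) (Complex.I • pᴴ) 0 := rfl

/-- `(p,r) ↦ [[−i p rᴴ, 0],[0, i rᴴ p]]` as a real-bilinear map. -/
noncomputable def BD : Matrix K M ℂ →ₗ[ℝ] Matrix K M ℂ →ₗ[ℝ] Matrix (K ⊕ M) (K ⊕ M) ℂ :=
  LinearMap.mk₂ ℝ
    (fun p r => Matrix.fromBlocks ((-Complex.I) • (p * rᴴ)) 0 0 (Complex.I • (rᴴ * p)))
    (fun p₁ p₂ r => by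
      simp [Matrix.add_mul, Matrix.mul_add, smul_add, Matrix.fromBlocks_add])
    (fun c p r => by
      simp only [Matrix.smul_mul, Matrix.mul_smul, Matrix.fromBlocks_smul, smul_zero]
      rw [smul_comm c (-Complex.I) (p * rᴴ), smul_comm c Complex.I (rᴴ * p)])
    (fun p r₁ r₂ => by
      simp [Matrix.conjTranspose_add, Matrix.add_mul, Matrix.mul_add, smul_add,
        Matrix.fromBlocks_add])
    (fun c p r => by
      simp only [conjTranspose_real_smul, Matrix.smul_mul, Matrix.mul_smul,
        Matrix.fromBlocks_smul, smul_zero]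
      rw [smul_comm c (-Complex.I) (p * rᴴ), smul_comm c Complex.I (rᴴ * p)])

@[simp] theorem BD_apply (p r : Matrix K M ℂ) :
    (BD p r : Matrix (K ⊕ M) (K ⊕ M) ℂ)
      = Matrix.fromBlocks ((-Complex.I) • (p * rᴴ)) 0 0 (Complex.I • (rᴴ * p)) := rfl

theorem blockV (p : Matrix K M ℂ) :
    ((Complex.I / 2) • Matrix.fromBlocks (1 : Matrix K K ℂ) 0 0 (-1 : Matrix M M ℂ))
        * Matrix.fromBlocks 0 p (-pᴴ) 0
      - Matrix.fromBlocks 0 p (-pᴴ) 0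
        * ((Complex.I / 2) • Matrix.fromBlocks (1 : Matrix K K ℂ) 0 0 (-1 : Matrix M M ℂ))
      = Matrix.fromBlocks 0 (Complex.I • p) (Complex.I • pᴴ) 0 := by
  simp only [Matrix.smul_mul, Matrix.mul_smul, Matrix.fromBlocks_multiply,
    Matrix.mul_zero, Matrix.zero_mul, Matrix.mul_one, Matrix.one_mul,
    Matrix.neg_mul, Matrix.mul_neg, neg_neg, add_zero, zero_add,
    Matrix.mul_one, Matrix.fromBlocks_smul]
  ext i j
  rcases i with i | i <;> rcases j with j | j <;>
    simp [Matrix.smul_apply, smul_eq_mul] <;> ring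

theorem blockComm (p r : Matrix K M ℂ) :
    Matrix.fromBlocks 0 p (-pᴴ) 0
        * Matrix.fromBlocks 0 (Complex.I • r) (Complex.I • rᴴ) 0
      - Matrix.fromBlocks 0 (Complex.I • r) (Complex.I • rᴴ) 0
        * Matrix.fromBlocks 0 p (-pᴴ) 0
      = -(Matrix.fromBlocks ((-Complex.I) • (r * pᴴ)) 0 0 (Complex.I • (pᴴ * r))
          + Matrix.fromBlocks ((-Complex.I) • (p * rᴴ)) 0 0 (Complex.I • (rᴴ * p))) := by
  simp only [Matrix.fromBlocks_multiply, Matrix.mul_smul, Matrix.smul_mul,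
    Matrix.mul_zero, Matrix.zero_mul, Matrix.neg_mul, Matrix.mul_neg,
    add_zero, zero_add, smul_neg, neg_neg, Matrix.fromBlocks_add, Matrix.fromBlocks_neg,
    neg_zero]
  ext i j
  rcases i with i | i <;> rcases j with j | j <;>
    simp [Matrix.smul_apply, Matrix.add_apply, Matrix.neg_apply, smul_eq_mul] <;> ring

theorem centProj_blockDiag (X : Matrix K K ℂ) (Y : Matrix M M ℂ) :
    centProj ((Complex.I / 2) • Matrix.fromBlocks (1 : Matrix K K ℂ) 0 0 (-1 : Matrix M M ℂ))
        (Matrix.fromBlocks X 0 0 Y) = Matrix.fromBlocks X 0 0 Y := by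
  ext i j
  rcases i with i | i <;> rcases j with j | j <;>
    simp [centProj, Matrix.smul_apply, Matrix.one_apply, smul_eq_mul]

theorem perpProj_blockDiag (X : Matrix K K ℂ) (Y : Matrix M M ℂ) :
    perpProj ((Complex.I / 2) • Matrix.fromBlocks (1 : Matrix K K ℂ) 0 0 (-1 : Matrix M M ℂ))
        (Matrix.fromBlocks X 0 0 Y) = 0 := by
  ext i j
  rcases i with i | i <;> rcases j with j | j <;>
    simp [perpProj, Matrix.smul_apply, Matrix.one_apply, smul_eq_mul]

end Blocks

end Stmt11Aux

open Stmt11Aux in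
/-- with `a = (i/2)·diag(I_k, −I_{n−k})`, `q : ℝ → M_{k×(n−k)}(ℂ)` of Schwartz
class, `u = [[0,q],[−q*,0]]` and `Q₂ = [[−iqq*, iq_x],[iq_x*, iq*q]]`, one has
`P_u([a, u_x]) = (Q₂)_x + [u, Q₂]`. -/
theorem stmt11 (k m : ℕ) (hk : 0 < k) (hm : 0 < m)
    (a : Matrix (Fin k ⊕ Fin m) (Fin k ⊕ Fin m) ℂ)
    (ha : a = (Complex.I / 2) • Matrix.fromBlocks 1 0 0 (-1))
    (q : ℝ → Matrix (Fin k) (Fin m) ℂ)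
    (hqS : IsSchwartz q)
    (u Q₂ : ℝ → Matrix (Fin k ⊕ Fin m) (Fin k ⊕ Fin m) ℂ)
    (hu : ∀ x, u x = Matrix.fromBlocks 0 (q x) (-(q x)ᴴ) 0)
    (hQ₂ : ∀ x, Q₂ x = Matrix.fromBlocks
        ((-Complex.I) • (q x * (q x)ᴴ)) (Complex.I • deriv q x)
        (Complex.I • (deriv q x)ᴴ) (Complex.I • ((q x)ᴴ * q x))) :
    ∀ x, Pu a u (fun y => a * deriv u y - deriv u y * a) x
        = deriv Q₂ x + (u x * Q₂ x - Q₂ x * u x) := by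
  obtain ⟨φ, hφ⟩ := hqS
  -- basic differentiability facts
  have hq1 : ∀ t, HasDerivAt q (deriv q t) t := by
    intro t
    have : DifferentiableAt ℝ q t := by rw [← hφ]; exact φ.differentiableAt
    exact this.hasDerivAt
  have hφ' : ⇑(SchwartzMap.derivCLM ℝ _ φ) = deriv q := by
    funext t
    rw [SchwartzMap.derivCLM_apply, hφ]
    rfl
  have hq2 : ∀ t, HasDerivAt (deriv q) (deriv (deriv q) t) t := by
    intro t
    have : DifferentiableAt ℝ (deriv q) t := by
      rw [← hφ']; exact (SchwartzMap.derivCLM ℝ _ φ).differentiableAt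
    exact this.hasDerivAt
  -- derivative of u
  have hueq : u = fun t => Lu (q t) := funext fun t => by rw [hu t, Lu_apply]
  have huder : ∀ t, HasDerivAt u (Lu (deriv q t)) t := by
    intro t
    rw [hueq]
    exact hasDerivAt_linear_comp Lu (hq1 t)
  have huderiv : ∀ t, deriv u t = Lu (deriv q t) := fun t => (huder t).deriv
  intro x
  set V : ℝ → Matrix (Fin k ⊕ Fin m) (Fin k ⊕ Fin m) ℂ :=
    fun y => a * deriv u y - deriv u y * a with hVdef
  have hVeq : ∀ t, V t = LV (deriv q t) := by
    intro t
    show a * deriv u t - deriv u t * a = _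
    rw [huderiv t, ha, Lu_apply, LV_apply]
    exact blockV (deriv q t)
  have hVder : HasDerivAt V (LV (deriv (deriv q) x)) x := by
    rw [funext hVeq]
    exact hasDerivAt_linear_comp LV (hq2 x)
  -- the diagonal part D and its derivative
  set D : ℝ → Matrix (Fin k ⊕ Fin m) (Fin k ⊕ Fin m) ℂ := fun t => BD (q t) (q t) with hDdef
  have hDder : ∀ t, HasDerivAt D (BD (deriv q t) (q t) + BD (q t) (deriv q t)) t :=
    fun t => hasDerivAt_bilin BD (hq1 t) (hq1 t)
  -- D is (the underlying function of) a Schwartz map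
  have hqTemp : Function.HasTemperateGrowth q := by
    rw [← hφ]; exact schwartz_hasTemperateGrowth φ
  set Ψ : SchwartzMap ℝ (Matrix (Fin k ⊕ Fin m) (Fin k ⊕ Fin m) ℂ) :=
    SchwartzMap.bilinLeftCLM (toCLM2 BD) hqTemp φ with hΨdef
  have hΨ : ⇑Ψ = D := by
    funext t
    show toCLM2 BD (φ t) (q t) = BD (q t) (q t)
    rw [toCLM2_apply, hφ]
  have hDtend : Tendsto D atBot (nhds 0) := by
    rw [← hΨ]
    exact (zero_at_infty Ψ).mono_left atBot_le_cocompact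
  letI : ContinuousENorm (Matrix (Fin k ⊕ Fin m) (Fin k ⊕ Fin m) ℂ) :=
    SeminormedAddGroup.toContinuousENorm
  have hDint : IntegrableOn
      (fun t => BD (deriv q t) (q t) + BD (q t) (deriv q t)) (Set.Iic x) := by
    have h1 : ⇑(SchwartzMap.derivCLM ℝ _ Ψ)
        = fun t => BD (deriv q t) (q t) + BD (q t) (deriv q t) := by
      funext t
      rw [SchwartzMap.derivCLM_apply, hΨ, (hDder t).deriv]
    have h2 := (SchwartzMap.derivCLM ℝ _ Ψ).integrable (μ := volume)
    rw [h1] at h2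
    exact h2.integrableOn
  have hFTC : (∫ t in Set.Iic x, (BD (deriv q t) (q t) + BD (q t) (deriv q t))) = D x := by
    have h := MeasureTheory.integral_Iic_of_hasDerivAt_of_tendsto'
      (fun t _ => hDder t) hDint hDtend
    simpa using h
  -- the commutator [u, V] and the projections
  have hcomm : ∀ t, u t * V t - V t * u t
      = -(BD (deriv q t) (q t) + BD (q t) (deriv q t)) := by
    intro t
    rw [hu t, hVeq t, LV_apply, BD_apply, BD_apply]
    exact blockComm (q t) (deriv q t)
  have hTu : Tu a u V x = -(D x) := by
    have hinteg : ∀ t, centProj a (u t * V t - V t * u t)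
        = -(BD (deriv q t) (q t) + BD (q t) (deriv q t)) := by
      intro t
      rw [hcomm t, ha, BD_apply, BD_apply]
      simp only [Matrix.fromBlocks_add, Matrix.fromBlocks_neg, add_zero, neg_zero]
      exact centProj_blockDiag _ _
    show (∫ t in Set.Iic x, centProj a (u t * V t - V t * u t)) = -(D x)
    simp only [hinteg]
    rw [MeasureTheory.integral_neg, hFTC]
  have hperp : perpProj a (u x * V x - V x * u x) = 0 := by
    rw [hcomm x, ha, BD_apply, BD_apply]
    simp only [Matrix.fromBlocks_add, Matrix.fromBlocks_neg, add_zero, neg_zero]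
    exact perpProj_blockDiag _ _
  -- Q₂ = D + V
  have hQeq : Q₂ = fun t => D t + V t := by
    funext t
    rw [hQ₂ t, hVeq t, hDdef]
    simp only [LV_apply, BD_apply]
    rw [Matrix.fromBlocks_add]
    simp
  have hQder : deriv Q₂ x
      = (BD (deriv q x) (q x) + BD (q x) (deriv q x)) + LV (deriv (deriv q) x) := by
    rw [hQeq]
    exact ((hDder x).add hVder).deriv
  -- assemble
  simp only [Pu]
  erw [hVder.deriv]
  rw [hTu, hperp, hQder, hQeq]
  simp only []
  rw [show u x * (D x + V x) - (D x + V x) * u x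
      = (u x * D x - D x * u x) + (u x * V x - V x * u x) by
    rw [Matrix.mul_add, Matrix.add_mul]; abel]
  rw [hcomm x]
  rw [Matrix.mul_neg, Matrix.neg_mul]
  abel
end
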